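/- Fix c ≥ 1 and set v_n := (2c)^{−|n|} for n ∈ ℤ. Let V be the bounded invertible weighted bilateral shift on H₀ := ℓ²(ℤ,ℂ) with (Vf)(n) = (v_n/v_{n−1})·f(n−1), and let V̂ := V ⊕ (V*)⁻¹ act on H₀ ⊕₂ H₀. Suppose L is a closed subspace of H₀ ⊕₂ H₀ with V̂(L) = L such that the spectrum of the operator induced by V̂ on L is contained in { z ∈ ℂ : |z| ≤ c }. Then L ⊆ H₀ ⊕ {0}, L has the form L₁ ⊕ {0} for a closed subspace L₁ ⊆ H₀ with V(L₁) = L₁ and |spectrum(V|L₁)| ≤ c, and L₁ ≠ H₀; in particular L is properly contained in H₀ ⊕ {0}. -/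

import Mathlib

noncomputable section
open Real ContinuousLinearMap

/-- The Hilbert space `ℓ²(ℤ, ℂ)` of square-summable two-sided complex sequences. -/
abbrev l2 : Type := lp (fun _ : ℤ => ℂ) 2

/-- The Hilbert direct sum `ℓ²(ℤ,ℂ) ⊕₂ ℓ²(ℤ,ℂ)`. -/
abbrev Hl : Type := WithLp 2 (l2 × l2)

/-- The continuous linear equivalence between `Hl` and `l2 × l2`. -/
def e : Hl ≃L[ℂ] l2 × l2 := WithLp.prodContinuousLinearEquiv 2 ℂ l2 l2

/-- The direct sum `A ⊕ B` of two bounded operators acting on `Hl`. -/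
def hatOp (A B : l2 →L[ℂ] l2) : Hl →L[ℂ] Hl :=
  ((e.symm : l2 × l2 →L[ℂ] Hl).comp (A.prodMap B)).comp (e : Hl →L[ℂ] l2 × l2)

/-- The embedding of `l2` onto the first component `H₀ ⊕ {0}` of `Hl`. -/
def incl₁ : l2 →L[ℂ] Hl :=
  (e.symm : l2 × l2 →L[ℂ] Hl).comp (ContinuousLinearMap.inl ℂ l2 l2)

/-- The restriction of a continuous linear map to an invariant submodule. -/
def restrictOp {H : Type*} [NormedAddCommGroup H] [InnerProductSpace ℂ H]
    (T : H →L[ℂ] H) (L : Submodule ℂ H) (hL : ∀ x ∈ L, T x ∈ L) : L →L[ℂ] L :=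
  { toLinearMap := (T : H →ₗ[ℂ] H).restrict hL
    cont := Continuous.subtype_mk (T.continuous.comp continuous_subtype_val) _ }

/-! The adjoint inverse `(V*)⁻¹` is again a forward weighted shift: its `n`-th power sends the
`m`-th coordinate to the `(m + n)`-th one, multiplied by `v m / v (m + n) ≥ (2c)ⁿ v m²`.
By Gelfand's formula, a spectrum inside `{|z| ≤ c}` forces `‖V̂ⁿ x‖ ≤ (3c/2)ⁿ ‖x‖` on `L` for
large `n`, which is incompatible with this `(2c)ⁿ` growth of a nonzero second component. Hence
`L = L₁ ⊕ 0`, and `V̂|L` is conjugate to `V|L₁`. Finally `L₁ = H₀` is impossible, since the same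
Gelfand bound would then hold for `V` itself, while `‖Vⁿ e₋ₙ‖ = (2c)ⁿ`. -/

open Filter

theorem eventually_norm_pow_le_pow {A : Type*} [NormedRing A] [NormedAlgebra ℂ A]
    [CompleteSpace A] (a : A) {c r : ℝ} (hr : 0 < r) (hcr : c < r)
    (h : ∀ z ∈ spectrum ℂ a, ‖z‖ ≤ c) :
    ∀ᶠ n : ℕ in atTop, ‖a ^ n‖ ≤ r ^ n := by
  have hρ : spectralRadius ℂ a < ENNReal.ofReal r := by
    refine lt_of_le_of_lt (iSup₂_le fun z hz => ?_) (ENNReal.ofReal_lt_ofReal_iff'.mpr ⟨hcr, hr⟩)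
    rw [← enorm_eq_nnnorm, ← ofReal_norm]
    exact ENNReal.ofReal_le_ofReal (h z hz)
  have htend := spectrum.pow_nnnorm_pow_one_div_tendsto_nhds_spectralRadius a
  filter_upwards [htend.eventually_lt_const hρ, eventually_ne_atTop 0] with n hn hn0
  have hlt := ENNReal.pow_lt_pow_left hn0 hn
  rw [one_div, ENNReal.rpow_inv_natCast_pow hn0, ← ENNReal.ofReal_pow hr.le, ← enorm_eq_nnnorm,
    ← ofReal_norm, ENNReal.ofReal_lt_ofReal_iff (by positivity)] at hlt
  exact hlt.le

theorem nonpos_of_eventually_mul_pow_le {a b s t : ℝ} (ht : 0 ≤ t) (hts : t < s)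
    (h : ∀ᶠ n : ℕ in atTop, a * s ^ n ≤ b * t ^ n) : a ≤ 0 := by
  have hs : 0 < s := ht.trans_lt hts
  have hlim : Tendsto (fun n : ℕ => b * (t / s) ^ n) atTop (nhds 0) := by
    simpa using (tendsto_pow_atTop_nhds_zero_of_lt_one (div_nonneg ht hs.le)
      ((div_lt_one hs).mpr hts)).const_mul b
  refine ge_of_tendsto hlim (h.mono fun n hn => ?_)
  rw [div_pow, ← mul_div_assoc, le_div_iff₀ (by positivity)]
  exact hn

theorem ContinuousLinearEquiv.spectrum_eq_of_comp_eq {𝕜 E F : Type*} [NormedField 𝕜]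
    [NormedAddCommGroup E] [NormedSpace 𝕜 E] [NormedAddCommGroup F] [NormedSpace 𝕜 F]
    (φ : E ≃L[𝕜] F) {S : E →L[𝕜] E} {T : F →L[𝕜] F} (h : (φ : E →L[𝕜] F) ∘L S = T ∘L φ) :
    spectrum 𝕜 S = spectrum 𝕜 T := by
  rw [← AlgEquiv.spectrum_eq (φ.conjContinuousAlgEquiv : (E →L[𝕜] E) ≃ₐ[𝕜] (F →L[𝕜] F)) S]
  congr 1
  ext x
  simpa using congr($h (φ.symm x))

theorem restrictOp_pow_apply {H : Type*} [NormedAddCommGroup H] [InnerProductSpace ℂ H]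
    (T : H →L[ℂ] H) (L : Submodule ℂ H) (hT : ∀ x ∈ L, T x ∈ L) (n : ℕ) (x : L) :
    ((restrictOp T L hT ^ n) x : H) = (T ^ n) x := by
  induction n with
  | zero => rfl
  | succ n ih => simp only [pow_succ', mul_apply_eq_comp, ← ih]; rfl

theorem eventually_norm_pow_apply_le {H : Type*} [NormedAddCommGroup H] [InnerProductSpace ℂ H]
    [CompleteSpace H] {T : H →L[ℂ] H} {L : Submodule ℂ H} (hL : IsClosed (L : Set H))
    (hT : ∀ x ∈ L, T x ∈ L) {c r : ℝ} (hr : 0 < r) (hcr : c < r)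
    (hspec : ∀ z ∈ spectrum ℂ (restrictOp T L hT), ‖z‖ ≤ c) :
    ∀ᶠ n : ℕ in atTop, ∀ x ∈ L, ‖(T ^ n) x‖ ≤ r ^ n * ‖x‖ := by
  have : CompleteSpace L := hL.completeSpace_coe
  filter_upwards [eventually_norm_pow_le_pow (restrictOp T L hT) hr hcr hspec] with n hn x hx
  calc ‖(T ^ n) x‖ = ‖((restrictOp T L hT ^ n) ⟨x, hx⟩ : H)‖ := by rw [restrictOp_pow_apply]
    _ = ‖(restrictOp T L hT ^ n) ⟨x, hx⟩‖ := (Submodule.coe_norm _).symm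
    _ ≤ r ^ n * ‖x‖ := (le_opNorm _ _).trans (mul_le_mul_of_nonneg_right hn (norm_nonneg x))

section DirectSum

theorem e_hatOp (A B : l2 →L[ℂ] l2) (p : Hl) : e (hatOp A B p) = (A (e p).1, B (e p).2) :=
  e.apply_symm_apply _

theorem hatOp_pow (A B : l2 →L[ℂ] l2) (n : ℕ) : hatOp A B ^ n = hatOp (A ^ n) (B ^ n) := by
  induction n with
  | zero => ext p; rfl
  | succ n ih =>
    ext1 p
    apply e.injective
    rw [pow_succ', mul_apply_eq_comp, ih, e_hatOp, e_hatOp, e_hatOp, pow_succ', pow_succ']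
    rfl

theorem norm_pow_apply_snd_le (A B : l2 →L[ℂ] l2) (n : ℕ) (p : Hl) :
    ‖(B ^ n) (e p).2‖ ≤ ‖(hatOp A B ^ n) p‖ := by
  have h : ‖(e ((hatOp A B ^ n) p)).2‖ ≤ ‖(hatOp A B ^ n) p‖ := WithLp.norm_snd_le l2 _
  simpa only [hatOp_pow, e_hatOp] using h

theorem e_incl₁ (x : l2) : e (incl₁ x) = (x, 0) := e.apply_symm_apply _

theorem incl₁_injective : Function.Injective incl₁ := fun x y h => by
  simpa [e_incl₁] using congr(e $h)

theorem hatOp_incl₁ (A B : l2 →L[ℂ] l2) (x : l2) : hatOp A B (incl₁ x) = incl₁ (A x) := by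
  apply e.injective
  rw [e_hatOp, e_incl₁, e_incl₁, map_zero]

theorem mem_range_incl₁ {p : Hl} (hp : (e p).2 = 0) :
    p ∈ LinearMap.range (incl₁ : l2 →ₗ[ℂ] Hl) :=
  ⟨(e p).1, e.injective ((e_incl₁ _).trans (Prod.ext rfl hp.symm))⟩

theorem map_eq_of_map_hatOp_map_incl₁_eq {A B : l2 →L[ℂ] l2} {L₁ : Submodule ℂ l2}
    (h : (L₁.map (incl₁ : l2 →ₗ[ℂ] Hl)).map (hatOp A B : Hl →ₗ[ℂ] Hl) =
      L₁.map (incl₁ : l2 →ₗ[ℂ] Hl)) :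
    L₁.map (A : l2 →ₗ[ℂ] l2) = L₁ := by
  have hcomm : (hatOp A B : Hl →ₗ[ℂ] Hl) ∘ₗ (incl₁ : l2 →ₗ[ℂ] Hl) = (incl₁ : l2 →ₗ[ℂ] Hl) ∘ₗ A :=
    LinearMap.ext (hatOp_incl₁ A B)
  apply Submodule.map_injective_of_injective incl₁_injective
  rw [← Submodule.map_comp, ← hcomm, Submodule.map_comp, h]

theorem spectrum_restrictOp_eq_of_map_incl₁_eq {A B : l2 →L[ℂ] l2} {L₁ : Submodule ℂ l2}
    {L : Submodule ℂ Hl} (hL : L₁.map (incl₁ : l2 →ₗ[ℂ] Hl) = L) (hA : ∀ x ∈ L₁, A x ∈ L₁)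
    (hAB : ∀ p ∈ L, hatOp A B p ∈ L) :
    spectrum ℂ (restrictOp A L₁ hA) = spectrum ℂ (restrictOp (hatOp A B) L hAB) := by
  subst hL
  let φ : L₁ ≃L[ℂ] L₁.map (incl₁ : l2 →ₗ[ℂ] Hl) := ContinuousLinearEquiv.equivOfInverse
    ((incl₁ ∘L L₁.subtypeL).codRestrict _ fun x => Submodule.mem_map_of_mem x.2)
    ((ContinuousLinearMap.fst ℂ l2 l2 ∘L (e : Hl →L[ℂ] l2 × l2) ∘L
      (L₁.map (incl₁ : l2 →ₗ[ℂ] Hl)).subtypeL).codRestrict L₁ fun ⟨_, x, hx, hxq⟩ => by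
        simpa [← hxq, e_incl₁] using hx)
    (fun x => Subtype.ext congr(Prod.fst $(e_incl₁ x)))
    (fun ⟨_, x, _, hxq⟩ => Subtype.ext (by subst hxq; exact congr(incl₁ (Prod.fst $(e_incl₁ x)))))
  exact φ.spectrum_eq_of_comp_eq (by ext x; exact (hatOp_incl₁ A B x).symm)

end DirectSum

section WeightedShift

variable {v : ℤ → ℝ} {V : (l2 →L[ℂ] l2)ˣ}
  (hV : ∀ (f : l2) (n : ℤ), (V : l2 →L[ℂ] l2) f n = ((v n / v (n - 1) : ℝ) : ℂ) * f (n - 1))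
include hV

theorem weightedShift_apply_single (m : ℤ) :
    (V : l2 →L[ℂ] l2) (lp.single 2 m 1) = ((v (m + 1) / v m : ℝ) : ℂ) • lp.single 2 (m + 1) 1 := by
  ext j
  rw [hV, lp.coeFn_smul, Pi.smul_apply, smul_eq_mul]
  rcases eq_or_ne j (m + 1) with rfl | h
  · rw [add_sub_cancel_right, lp.single_apply_self, lp.single_apply_self]
  · rw [lp.single_apply_ne _ _ _ (by omega : j - 1 ≠ m), lp.single_apply_ne _ _ _ h, mul_zero,
      mul_zero]

theorem weightedShift_pow_apply_single (hv : ∀ n, v n ≠ 0) (m : ℤ) (n : ℕ) :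
    ((V : l2 →L[ℂ] l2) ^ n) (lp.single 2 m 1) =
      ((v (m + n) / v m : ℝ) : ℂ) • lp.single 2 (m + n) 1 := by
  induction n with
  | zero => simp [div_self (hv m)]
  | succ n ih =>
    rw [pow_succ', mul_apply_eq_comp, ih, map_smul, weightedShift_apply_single hV, smul_smul,
      ← Complex.ofReal_mul, div_mul_div_cancel₀' (hv _)]
    push_cast
    ring_nf

theorem weightedShift_inv_pow_apply_single (hv : ∀ n, v n ≠ 0) (m : ℤ) (n : ℕ) :
    (((V⁻¹ : (l2 →L[ℂ] l2)ˣ) : l2 →L[ℂ] l2) ^ n) (lp.single 2 (m + n) 1) =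
      ((v m / v (m + n) : ℝ) : ℂ) • lp.single 2 m 1 := by
  have h := congr((((V⁻¹ : (l2 →L[ℂ] l2)ˣ) : l2 →L[ℂ] l2) ^ n)
    $(weightedShift_pow_apply_single hV hv m n))
  rw [← mul_apply_eq_comp, ← Units.val_pow_eq_pow_val, ← Units.val_pow_eq_pow_val, inv_pow,
    Units.inv_mul, one_apply_eq_self, map_smul] at h
  have hcancel : v m / v (m + n) * (v (m + n) / v m) = 1 := by field_simp [hv m, hv (m + n)]
  rw [← Units.val_pow_eq_pow_val, inv_pow, h, smul_smul, ← Complex.ofReal_mul, hcancel,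
    Complex.ofReal_one, one_smul]

theorem adjoint_weightedShift_inv_pow_apply (hv : ∀ n, v n ≠ 0) (y : l2) (m : ℤ) (n : ℕ) :
    ((adjoint ((V⁻¹ : (l2 →L[ℂ] l2)ˣ) : l2 →L[ℂ] l2)) ^ n) y (m + n) =
      ((v m / v (m + n) : ℝ) : ℂ) * y m := by
  rw [← star_eq_adjoint, ← star_pow, star_eq_adjoint]
  have h := lp.inner_single_left (𝕜 := ℂ) (m + n) (1 : ℂ)
    (adjoint ((((V⁻¹ : (l2 →L[ℂ] l2)ˣ) : l2 →L[ℂ] l2)) ^ n) y)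
  rw [adjoint_inner_right,
    weightedShift_inv_pow_apply_single hV hv, inner_smul_left, lp.inner_single_left] at h
  simpa only [RCLike.inner_apply, map_one, mul_one, Complex.conj_ofReal] using h.symm

end WeightedShift

section ExponentialWeights

variable {c : ℝ} {v : ℤ → ℝ} (hc : 1 ≤ c) (hv : ∀ n : ℤ, v n = (2 * c) ^ (-|(n : ℝ)|))
include hc hv

theorem weight_pos (n : ℤ) : 0 < v n := by
  rw [hv]
  exact Real.rpow_pos_of_pos (by linarith) _

theorem pow_mul_weight_mul_weight_le_one (m : ℤ) (n : ℕ) : (2 * c) ^ n * v m * v (m + n) ≤ 1 := by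
  have h2c : 0 < 2 * c := by linarith
  rw [hv, hv, ← Real.rpow_natCast, ← Real.rpow_add h2c, ← Real.rpow_add h2c]
  refine Real.rpow_le_one_of_one_le_of_nonpos (by linarith) ?_
  have := abs_sub ((m : ℝ) + n) m
  push_cast
  rw [add_sub_cancel_left, Nat.abs_cast] at this
  linarith

theorem pow_mul_weight_sq_le_weight_div (m : ℤ) (n : ℕ) :
    (2 * c) ^ n * v m ^ 2 ≤ v m / v (m + n) := by
  have hm := weight_pos hc hv m
  rw [le_div_iff₀ (weight_pos hc hv _)]
  nlinarith [pow_mul_weight_mul_weight_le_one hc hv m n]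

theorem weight_zero_div_weight_neg (n : ℕ) : v 0 / v (-n) = (2 * c) ^ n := by
  rw [hv, hv, ← Real.rpow_sub (by linarith)]
  simp

variable {V : (l2 →L[ℂ] l2)ˣ}
  (hV : ∀ (f : l2) (n : ℤ), (V : l2 →L[ℂ] l2) f n = ((v n / v (n - 1) : ℝ) : ℂ) * f (n - 1))
include hV

theorem eq_zero_of_eventually_norm_adjoint_inv_pow_le {r B : ℝ} (hr0 : 0 ≤ r) (hr : r < 2 * c)
    {y : l2} (h : ∀ᶠ n : ℕ in atTop,
      ‖(adjoint ((V⁻¹ : (l2 →L[ℂ] l2)ˣ) : l2 →L[ℂ] l2) ^ n) y‖ ≤ B * r ^ n) :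
    y = 0 := by
  ext m
  have hm := weight_pos hc hv m
  suffices ‖y m‖ * v m ^ 2 ≤ 0 by
    simpa using nonpos_of_mul_nonpos_left this (by positivity)
  refine nonpos_of_eventually_mul_pow_le (b := B) hr0 hr (h.mono fun n hn => ?_)
  have hv0 : ∀ k, v k ≠ 0 := fun k => (weight_pos hc hv k).ne'
  calc ‖y m‖ * v m ^ 2 * (2 * c) ^ n = ‖y m‖ * ((2 * c) ^ n * v m ^ 2) := by ring
    _ ≤ ‖y m‖ * (v m / v (m + n)) :=
        mul_le_mul_of_nonneg_left (pow_mul_weight_sq_le_weight_div hc hv m n) (norm_nonneg _)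
    _ = ‖(adjoint ((V⁻¹ : (l2 →L[ℂ] l2)ˣ) : l2 →L[ℂ] l2) ^ n) y (m + n)‖ := by
        rw [adjoint_weightedShift_inv_pow_apply hV hv0, norm_mul, Complex.norm_real,
          Real.norm_of_nonneg (div_pos hm (weight_pos hc hv _)).le, mul_comm]
    _ ≤ B * r ^ n := (lp.norm_apply_le_norm two_ne_zero _ _).trans hn

theorem not_eventually_norm_weightedShift_pow_le {r : ℝ} (hr0 : 0 ≤ r) (hr : r < 2 * c) :
    ¬ ∀ᶠ n : ℕ in atTop, ∀ x, ‖((V : l2 →L[ℂ] l2) ^ n) x‖ ≤ r ^ n * ‖x‖ := by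
  intro h
  have hv0 : ∀ k, v k ≠ 0 := fun k => (weight_pos hc hv k).ne'
  have hsingle : ∀ k : ℤ, ‖(lp.single 2 k (1 : ℂ) : l2)‖ = 1 := fun k => by
    simp [lp.norm_single two_pos]
  refine absurd (nonpos_of_eventually_mul_pow_le (b := 1) hr0 hr (h.mono fun n hn => ?_))
    one_pos.not_ge
  calc 1 * (2 * c) ^ n = ‖((V : l2 →L[ℂ] l2) ^ n) (lp.single 2 (-n) 1)‖ := by
        rw [weightedShift_pow_apply_single hV hv0, neg_add_cancel, norm_smul, hsingle,
          weight_zero_div_weight_neg hc hv, Complex.norm_real,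
          Real.norm_of_nonneg (by positivity), one_mul, mul_one]
    _ ≤ 1 * r ^ n := by simpa [hsingle, mul_comm] using hn (lp.single 2 (-n) 1)

end ExponentialWeights

/-- Let `V` be the weighted bilateral shift with weights `v n = (2c)^(−|n|)` (`c ≥ 1`) and
`V̂ = V ⊕ (V*)⁻¹` on `Hl`.  If `L` is a closed subspace with `V̂(L) = L` on which the induced
operator has spectrum inside `{|z| ≤ c}`, then `L = L₁ ⊕ {0}` for a closed `V`-invariant
subspace `L₁ ≠ H₀` with `|spectrum(V|L₁)| ≤ c`; in particular `L ⊊ H₀ ⊕ {0}`. -/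
theorem stmt16 (c : ℝ) (hc : 1 ≤ c)
    (v : ℤ → ℝ) (hv : ∀ n : ℤ, v n = (2 * c) ^ (-|(n : ℝ)|))
    (V : (l2 →L[ℂ] l2)ˣ)
    (hV : ∀ (f : l2) (n : ℤ),
      (V : l2 →L[ℂ] l2) f n = ((v n / v (n - 1) : ℝ) : ℂ) * f (n - 1))
    (L : Submodule ℂ Hl) (hclosed : IsClosed (L : Set Hl))
    (hmap : Submodule.map
      ((hatOp (V : l2 →L[ℂ] l2) (adjoint ((V⁻¹ : (l2 →L[ℂ] l2)ˣ) : l2 →L[ℂ] l2))) : Hl →ₗ[ℂ] Hl) L = L)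
    (hinv : ∀ x ∈ L,
      hatOp (V : l2 →L[ℂ] l2) (adjoint ((V⁻¹ : (l2 →L[ℂ] l2)ˣ) : l2 →L[ℂ] l2)) x ∈ L)
    (hspec : ∀ z ∈ spectrum ℂ
      (restrictOp (hatOp (V : l2 →L[ℂ] l2)
        (adjoint ((V⁻¹ : (l2 →L[ℂ] l2)ˣ) : l2 →L[ℂ] l2))) L hinv), ‖z‖ ≤ c) :
    ∃ L₁ : Submodule ℂ l2,
      IsClosed (L₁ : Set l2) ∧
      L = Submodule.map (incl₁ : l2 →ₗ[ℂ] Hl) L₁ ∧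
      Submodule.map ((V : l2 →L[ℂ] l2) : l2 →ₗ[ℂ] l2) L₁ = L₁ ∧
      (∃ hinv₁ : ∀ x ∈ L₁, (V : l2 →L[ℂ] l2) x ∈ L₁,
        ∀ z ∈ spectrum ℂ (restrictOp (V : l2 →L[ℂ] l2) L₁ hinv₁), ‖z‖ ≤ c) ∧
      L₁ ≠ ⊤ ∧
      L < Submodule.map (incl₁ : l2 →ₗ[ℂ] Hl) ⊤ := by
  have hcr : c < 3 * c / 2 := by linarith
  have hr : 3 * c / 2 < 2 * c := by linarith
  have hbound := eventually_norm_pow_apply_le hclosed hinv (by positivity) hcr hspec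
  have hsnd : ∀ p ∈ L, (e p).2 = 0 := fun p hp =>
    eq_zero_of_eventually_norm_adjoint_inv_pow_le hc hv hV (by positivity) hr <|
      hbound.mono fun n hn =>
        (norm_pow_apply_snd_le _ _ n p).trans ((hn p hp).trans_eq (mul_comm _ _))
  set L₁ := L.comap (incl₁ : l2 →ₗ[ℂ] Hl)
  have hclosed₁ : IsClosed (L₁ : Set l2) := hclosed.preimage incl₁.continuous
  have hLL₁ : L₁.map (incl₁ : l2 →ₗ[ℂ] Hl) = L :=
    Submodule.map_comap_eq_of_le fun p hp => mem_range_incl₁ (hsnd p hp)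
  have hmap₁ : L₁.map ((V : l2 →L[ℂ] l2) : l2 →ₗ[ℂ] l2) = L₁ :=
    map_eq_of_map_hatOp_map_incl₁_eq (hLL₁ ▸ hmap)
  have hinv₁ : ∀ x ∈ L₁, (V : l2 →L[ℂ] l2) x ∈ L₁ := fun x hx =>
    hmap₁ ▸ Submodule.mem_map_of_mem hx
  have hspec₁ : ∀ z ∈ spectrum ℂ (restrictOp (V : l2 →L[ℂ] l2) L₁ hinv₁), ‖z‖ ≤ c := by
    rwa [spectrum_restrictOp_eq_of_map_incl₁_eq hLL₁ hinv₁ hinv]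
  have htop : L₁ ≠ ⊤ := fun htop =>
    not_eventually_norm_weightedShift_pow_le hc hv hV (by positivity) hr <|
      (eventually_norm_pow_apply_le hclosed₁ hinv₁ (by positivity) hcr hspec₁).mono
        fun n hn x => hn x (htop ▸ Submodule.mem_top)
  refine ⟨L₁, hclosed₁, hLL₁.symm, hmap₁, ⟨hinv₁, hspec₁⟩, htop, ?_⟩
  exact hLL₁ ▸ Submodule.map_strictMono_of_injective incl₁_injective htop.lt_top
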